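/- Let n and s be positive integers with 1 ≤ s < n, and consider the unbalanced problem with k = 2s. The diagonal family { (A, A) : A ⊆ Fin n, |A| = s } consists of C(n, s) feasible solutions (each has |A| + |A| = 2s = k vertices), and any two distinct members are adjacent in the nonnegative cone decomposition: for distinct A, A' the weight function c with c i j = 1 if (i ∈ A and j ∈ A) or (i ∈ A' and j ∈ A') and c i j = 0 otherwise is nonnegative, gives both solutions weight s², and gives every other feasible solution weight strictly less than s². Hence the clique number of the graph of the nonnegative cone decomposition K^max_{n,k} is at least C(n, s). -/

import Mathlib

/-!
The weight function is the indicator of `E = A ×ˢ A ∪ A' ×ˢ A'`, so the weight of `(U, V)`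
counts the pairs of `U ×ˢ V` lying in `E`; it is at most `|U| |V| ≤ s²` when `|U| + |V| = 2s`.
Equality forces `|U| = |V| = s` and `U ×ˢ V ⊆ E`, and such a product inside the union of two
distinct squares of side `s` must be one of the squares: a point of `U`
outside `A` pushes all of `V` into `A'`, and then a point of `A' \ A` pushes `U` into `A'`.
-/

open Finset

/-- The weight of the biclique with parts `U`, `V` under the edge-weight
function `c` on the complete bipartite graph `K_{n,n}`. -/
noncomputable def weight {n : ℕ} (c : Fin n → Fin n → ℝ) (U V : Finset (Fin n)) : ℝ :=
  ∑ i ∈ U, ∑ j ∈ V, c i j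

/-- The diagonal family `{(A, A) : A ⊆ Fin n, |A| = s}`. -/
def diagFamily (n s : ℕ) : Finset (Finset (Fin n) × Finset (Fin n)) :=
  (Finset.powersetCard s (Finset.univ : Finset (Fin n))).image (fun A => (A, A))

lemma eq_and_eq_of_add_eq_two_mul_of_sq_le_mul {u v s : ℕ} (h : u + v = 2 * s)
    (hle : s ^ 2 ≤ u * v) : u = s ∧ v = s := by
  have : u = v := by nlinarith [sq_nonneg ((u : ℤ) - v)]
  omega

section ProductSubsetSquares

variable {α : Type*} [DecidableEq α] {U V A A' : Finset α}

lemma right_subset_of_product_subset_union_squares (h : U ×ˢ V ⊆ A ×ˢ A ∪ A' ×ˢ A')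
    {i : α} (hiU : i ∈ U) (hiA : i ∉ A) : V ⊆ A' := fun j hjV => by
  have := h (mk_mem_product hiU hjV)
  simp only [mem_union, mem_product] at this
  tauto

lemma left_subset_of_product_subset_union_squares (h : U ×ˢ V ⊆ A ×ˢ A ∪ A' ×ˢ A')
    {j : α} (hjV : j ∈ V) (hjA : j ∉ A) : U ⊆ A' := fun i hiU => by
  have := h (mk_mem_product hiU hjV)
  simp only [mem_union, mem_product] at this
  tauto

lemma eq_or_eq_of_product_subset_union_squares (h : U ×ˢ V ⊆ A ×ˢ A ∪ A' ×ˢ A')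
    (hne : A ≠ A') (hA' : #A' = #A) (hU : #U = #A) (hV : #V = #A) :
    (U = A ∧ V = A) ∨ (U = A' ∧ V = A') := by
  have eq_of_subset {W B : Finset α} (hWB : W ⊆ B) (hW : #W = #B) : W = B :=
    eq_of_subset_of_card_le hWB hW.ge
  by_cases hA : U ⊆ A ∧ V ⊆ A
  · exact .inl ⟨eq_of_subset hA.1 hU, eq_of_subset hA.2 hV⟩
  obtain ⟨k, hkA', hkA⟩ : ∃ k ∈ A', k ∉ A :=
    not_subset.mp fun hsub => hne (eq_of_subset hsub hA').symm
  have hsubA' : U ⊆ A' ∧ V ⊆ A' := by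
    rcases not_and_or.mp hA with hUA | hVA
    · obtain ⟨i, hiU, hiA⟩ := not_subset.mp hUA
      have hVA' := right_subset_of_product_subset_union_squares h hiU hiA
      have hkV : k ∈ V := (eq_of_subset hVA' (hV.trans hA'.symm)).symm ▸ hkA'
      exact ⟨left_subset_of_product_subset_union_squares h hkV hkA, hVA'⟩
    · obtain ⟨j, hjV, hjA⟩ := not_subset.mp hVA
      have hUA' := left_subset_of_product_subset_union_squares h hjV hjA
      have hkU : k ∈ U := (eq_of_subset hUA' (hU.trans hA'.symm)).symm ▸ hkA'
      exact ⟨hUA', right_subset_of_product_subset_union_squares h hkU hkA⟩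
  exact .inr ⟨eq_of_subset hsubA'.1 (hU.trans hA'.symm), eq_of_subset hsubA'.2 (hV.trans hA'.symm)⟩

lemma eq_or_eq_of_sq_le_card_product_inter_union_squares {s : ℕ} (hA : #A = s) (hA' : #A' = s)
    (hne : A ≠ A') (hUV : #U + #V = 2 * s) (h : s ^ 2 ≤ #(U ×ˢ V ∩ (A ×ˢ A ∪ A' ×ˢ A'))) :
    (U = A ∧ V = A) ∨ (U = A' ∧ V = A') := by
  have hle : #(U ×ˢ V ∩ (A ×ˢ A ∪ A' ×ˢ A')) ≤ #U * #V :=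
    card_product U V ▸ card_le_card inter_subset_left
  obtain ⟨hU, hV⟩ := eq_and_eq_of_add_eq_two_mul_of_sq_le_mul hUV (h.trans hle)
  have hsub : U ×ˢ V ⊆ A ×ˢ A ∪ A' ×ˢ A' := by
    refine inter_eq_left.mp (eq_of_subset_of_card_le inter_subset_left ?_)
    rw [card_product, hU, hV, ← sq]
    exact h
  exact eq_or_eq_of_product_subset_union_squares hsub hne (hA'.trans hA.symm)
    (hU.trans hA.symm) (hV.trans hA.symm)

end ProductSubsetSquares

lemma weight_eq_card_product_inter {n : ℕ} {c : Fin n → Fin n → ℝ} {E : Finset (Fin n × Fin n)}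
    (hc : ∀ i j, c i j = if (i, j) ∈ E then 1 else 0) (U V : Finset (Fin n)) :
    weight c U V = #(U ×ˢ V ∩ E) := by
  rw [weight, ← sum_product' (f := c)]
  simp only [hc, Prod.mk.eta, sum_boole, filter_mem_eq_inter]

lemma card_diagFamily (n s : ℕ) : #(diagFamily n s) = n.choose s := by
  rw [diagFamily, card_image_of_injective _ fun _ _ h => (Prod.ext_iff.mp h).1,
    card_powersetCard, card_univ, Fintype.card_fin]

theorem maxwcbs_clique_number_even_general (n s : ℕ) :
    (diagFamily n s).card = n.choose s ∧
    (∀ x ∈ diagFamily n s, x.1.card + x.2.card = 2 * s) ∧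
    (∀ A A' : Finset (Fin n), A.card = s → A'.card = s → A ≠ A' →
      ∀ c : Fin n → Fin n → ℝ,
        (∀ i j, c i j = if (i ∈ A ∧ j ∈ A) ∨ (i ∈ A' ∧ j ∈ A') then 1 else 0) →
        (∀ i j, 0 ≤ c i j) ∧
        weight c A A = (s : ℝ) ^ 2 ∧
        weight c A' A' = (s : ℝ) ^ 2 ∧
        ∀ Uz Vz : Finset (Fin n), Uz.card + Vz.card = 2 * s →
          (Uz, Vz) ≠ (A, A) → (Uz, Vz) ≠ (A', A') →
          weight c Uz Vz < (s : ℝ) ^ 2) := by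
  refine ⟨card_diagFamily n s, ?_, fun A A' hA hA' hne c hc => ?_⟩
  · simp only [diagFamily, mem_image, mem_powersetCard_univ]
    rintro _ ⟨A, hA, rfl⟩
    rw [hA, two_mul]
  have hcE : ∀ i j, c i j = if (i, j) ∈ A ×ˢ A ∪ A' ×ˢ A' then 1 else 0 := by
    simpa only [mem_union, mem_product] using hc
  have weight_square {B : Finset (Fin n)} (hB : #B = s) (hBE : B ×ˢ B ⊆ A ×ˢ A ∪ A' ×ˢ A') :
      weight c B B = (s : ℝ) ^ 2 := by
    rw [weight_eq_card_product_inter hcE, inter_eq_left.mpr hBE, card_product, hB]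
    push_cast
    ring
  refine ⟨fun i j => by rw [hc]; split <;> norm_num,
    weight_square hA subset_union_left, weight_square hA' subset_union_right,
    fun U V hUV hUA hUA' => ?_⟩
  rw [weight_eq_card_product_inter hcE]
  by_contra! hge
  rcases eq_or_eq_of_sq_le_card_product_inter_union_squares hA hA' hne hUV (by exact_mod_cast hge)
    with ⟨rfl, rfl⟩ | ⟨rfl, rfl⟩
  exacts [hUA rfl, hUA' rfl]

/-- For the unbalanced problem with `k = 2s`, the diagonal family consists
of `C(n,s)` feasible solutions (each with `s + s = 2s` vertices) which are
pairwise adjacent in the nonnegative cone decomposition `K^max_{n,k}`: for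
distinct `A`, `A'`, the 0/1 weight function supported on the edges of the
two bicliques is nonnegative, gives both of them weight `s²`, and gives
every other feasible solution strictly smaller weight. Hence the clique
number of the graph of `K^max_{n,2s}` is at least `C(n,s)`. -/
theorem maxwcbs_clique_number_even (n s : ℕ) (hs : 1 ≤ s) (hsn : s < n) :
    (diagFamily n s).card = n.choose s ∧
    (∀ x ∈ diagFamily n s, x.1.card + x.2.card = 2 * s) ∧
    (∀ A A' : Finset (Fin n), A.card = s → A'.card = s → A ≠ A' →
      ∀ c : Fin n → Fin n → ℝ,
        (∀ i j, c i j = if (i ∈ A ∧ j ∈ A) ∨ (i ∈ A' ∧ j ∈ A') then 1 else 0) →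
        (∀ i j, 0 ≤ c i j) ∧
        weight c A A = (s : ℝ) ^ 2 ∧
        weight c A' A' = (s : ℝ) ^ 2 ∧
        ∀ Uz Vz : Finset (Fin n), Uz.card + Vz.card = 2 * s →
          (Uz, Vz) ≠ (A, A) → (Uz, Vz) ≠ (A', A') →
          weight c Uz Vz < (s : ℝ) ^ 2) :=
  maxwcbs_clique_number_even_general n s
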